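/- arXiv:2401.15567 — 2 statements merged into one kernel-verified Lean document; each statement's English description precedes it below -/
import Mathlib

section
/- Let X be a random d×d real symmetric positive semidefinite matrix with integrable entries, let U be a trace super-uniform random d×d positive semidefinite matrix independent of X, and let A be a d×d symmetric positive definite matrix. Then P( X ⋠ A^{1/2} U A^{1/2} ) ≤ tr( E[X] · A⁻¹ ). -/
open MeasureTheory ProbabilityTheory Matrix Filter

noncomputable section

/-- Measurable space structure on matrices (entrywise). -/
instance matMS (d : ℕ) : MeasurableSpace (Matrix (Fin d) (Fin d) ℝ) :=
  inferInstanceAs (MeasurableSpace (Fin d → Fin d → ℝ))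

/-- Loewner order: `A ⪯ B` iff `B - A` is positive semidefinite. -/
def LoewnerLE {d : ℕ} (A B : Matrix (Fin d) (Fin d) ℝ) : Prop := (B - A).PosSemidef

/-- Entrywise expectation of a random matrix. -/
def matExpect {Ω : Type*} {_ : MeasurableSpace Ω} {d : ℕ} (μ : Measure Ω)
    (X : Ω → Matrix (Fin d) (Fin d) ℝ) : Matrix (Fin d) (Fin d) ℝ :=
  Matrix.of fun i j => ∫ ω, X ω i j ∂μ

/-- Entrywise conditional expectation of a random matrix. -/
def matCondExp {Ω : Type*} {m0 : MeasurableSpace Ω} {d : ℕ} (μ : Measure Ω)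
    (m : MeasurableSpace Ω) (X : Ω → Matrix (Fin d) (Fin d) ℝ) : Ω → Matrix (Fin d) (Fin d) ℝ :=
  fun ω => Matrix.of fun i j => (μ[fun ω' => X ω' i j | m]) ω

/-- Spectral functional calculus for real symmetric matrices: apply `f` to the eigenvalues. -/
def matCFC {d : ℕ} (f : ℝ → ℝ) (X : Matrix (Fin d) (Fin d) ℝ) : Matrix (Fin d) (Fin d) ℝ :=
  if hX : X.IsHermitian then
    (hX.eigenvectorUnitary : Matrix (Fin d) (Fin d) ℝ) *
      Matrix.diagonal (fun i => f (hX.eigenvalues i)) *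
      star (hX.eigenvectorUnitary : Matrix (Fin d) (Fin d) ℝ)
  else 0

/-- Positive semidefinite square root (via the spectral calculus). -/
def matSqrt {d : ℕ} (X : Matrix (Fin d) (Fin d) ℝ) : Matrix (Fin d) (Fin d) ℝ :=
  matCFC Real.sqrt X

/-- Matrix absolute value of a symmetric matrix. -/
def matAbs {d : ℕ} (X : Matrix (Fin d) (Fin d) ℝ) : Matrix (Fin d) (Fin d) ℝ :=
  matCFC (fun x => |x|) X

/-- Real power of a symmetric (positive (semi)definite) matrix. -/
def matRPow {d : ℕ} (p : ℝ) (X : Matrix (Fin d) (Fin d) ℝ) : Matrix (Fin d) (Fin d) ℝ :=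
  matCFC (fun x => x ^ p) X

/-- Matrix logarithm of a positive definite matrix. -/
def matLog {d : ℕ} (X : Matrix (Fin d) (Fin d) ℝ) : Matrix (Fin d) (Fin d) ℝ :=
  matCFC Real.log X

/-- Matrix exponential. -/
def matExpMat {d : ℕ} (X : Matrix (Fin d) (Fin d) ℝ) : Matrix (Fin d) (Fin d) ℝ :=
  NormedSpace.exp X

/-- Largest eigenvalue of a symmetric matrix. -/
def lamMax {d : ℕ} (X : Matrix (Fin d) (Fin d) ℝ) : ℝ :=
  if hX : X.IsHermitian then ⨆ i, hX.eigenvalues i else 0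

/-- Operator (spectral) norm: the largest absolute value of an eigenvalue. -/
def specNorm {d : ℕ} (X : Matrix (Fin d) (Fin d) ℝ) : ℝ :=
  if hX : X.IsHermitian then ⨆ i, |hX.eigenvalues i| else 0

/-- A random positive semidefinite matrix `U` is trace super-uniform if
`P(U ⋡ Y) ≤ tr Y` for every positive semidefinite `Y`. -/
def TraceSuperUniform {Ω : Type*} {_ : MeasurableSpace Ω} {d : ℕ} (μ : Measure Ω)
    (U : Ω → Matrix (Fin d) (Fin d) ℝ) : Prop :=
  ∀ Y : Matrix (Fin d) (Fin d) ℝ, Y.PosSemidef →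
    μ {ω | ¬ LoewnerLE Y (U ω)} ≤ ENNReal.ofReal Y.trace

/-- Matrix supermartingale: adapted, symmetric, entrywise integrable, and
`E(Y (n+1) | ℱ n) ⪯ Y n` a.s. for every `n`. -/
def IsMatrixSupermartingale {Ω : Type*} {m0 : MeasurableSpace Ω} {d : ℕ}
    (ℱ : Filtration ℕ m0) (μ : Measure Ω) (Y : ℕ → Ω → Matrix (Fin d) (Fin d) ℝ) : Prop :=
  (∀ n ω, (Y n ω).IsHermitian) ∧
  (∀ n i j, StronglyMeasurable[ℱ n] fun ω => Y n ω i j) ∧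
  (∀ n i j, Integrable (fun ω => Y n ω i j) μ) ∧
  (∀ n, ∀ᵐ ω ∂μ, LoewnerLE (matCondExp μ (ℱ n) (Y (n + 1)) ω) (Y n ω))

/-- Matrix submartingale: adapted, symmetric, entrywise integrable, and
`E(Y (n+1) | ℱ n) ⪰ Y n` a.s. for every `n`. -/
def IsMatrixSubmartingale {Ω : Type*} {m0 : MeasurableSpace Ω} {d : ℕ}
    (ℱ : Filtration ℕ m0) (μ : Measure Ω) (Y : ℕ → Ω → Matrix (Fin d) (Fin d) ℝ) : Prop :=
  (∀ n ω, (Y n ω).IsHermitian) ∧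
  (∀ n i j, StronglyMeasurable[ℱ n] fun ω => Y n ω i j) ∧
  (∀ n i j, Integrable (fun ω => Y n ω i j) μ) ∧
  (∀ n, ∀ᵐ ω ∂μ, LoewnerLE (Y n ω) (matCondExp μ (ℱ n) (Y (n + 1)) ω))

/-- Exchangeability of a sequence of random matrices: any finitely supported permutation
of the indices leaves the joint law invariant. -/
def MatExchangeable {Ω : Type*} {_ : MeasurableSpace Ω} {d : ℕ} (μ : Measure Ω)
    (X : ℕ → Ω → Matrix (Fin d) (Fin d) ℝ) : Prop :=
  ∀ σ : Equiv.Perm ℕ, {n | σ n ≠ n}.Finite →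
    Measure.map (fun ω n => X (σ n) ω) μ = Measure.map (fun ω n => X n ω) μ

/-! Conjugating by `A^{-1/2}` turns the event into `G ⋡ U` with `G = A^{-1/2} X A^{-1/2}`, and
`E[tr G] = tr(E[X] A⁻¹)`. If `G` took countably many values, independence would give
`P(G ⋡ U) = ∑_g P(G = g) P(U ⋡ g) ≤ ∑_g P(G = g) tr g = E[tr G]`. In general, round the entries of
`G` down to the grid `δℤ` and add `dδ • 1`: this dominates `G` in the Loewner order, takes countably
many values and costs `d²δ` in trace; then let `δ → 0`. Working with a countably-valued majorant
avoids conditioning on `G`, and with it any measurability assumption on `U`. -/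

open scoped MatrixOrder ComplexOrder Topology

instance (d : ℕ) : BorelSpace (Matrix (Fin d) (Fin d) ℝ) :=
  inferInstanceAs (BorelSpace (Fin d → Fin d → ℝ))

section LoewnerOrder

variable {n : Type*} [Fintype n] {d : ℕ}

lemma loewnerLE_iff_le {A B : Matrix (Fin d) (Fin d) ℝ} : LoewnerLE A B ↔ A ≤ B := Iff.rfl

lemma matSqrt_eq_sqrt {A : Matrix (Fin d) (Fin d) ℝ} (hA : A.PosSemidef) :
    matSqrt A = CFC.sqrt A := by
  rw [CFC.sqrt_eq_real_sqrt A hA.nonneg, cfcₙ_eq_cfc, hA.1.cfc_eq, matSqrt, matCFC, dif_pos hA.1]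
  rfl

lemma Matrix.isClosed_setOf_posSemidef {𝕜 : Type*} [RCLike 𝕜] :
    IsClosed {M : Matrix n n 𝕜 | M.PosSemidef} := by
  have h : {M : Matrix n n 𝕜 | M.PosSemidef} =
      {M | Mᴴ = M} ∩ ⋂ x : n → 𝕜, {M | 0 ≤ star x ⬝ᵥ (M *ᵥ x)} := by
    ext M
    simp only [Set.mem_inter_iff, Set.mem_iInter, posSemidef_iff_dotProduct_mulVec]
    rfl
  rw [h]
  exact (isClosed_eq (by fun_prop) continuous_id).inter
    (isClosed_iInter fun x => isClosed_le continuous_const (by fun_prop))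

lemma measurableSet_setOf_not_le (Y : Matrix (Fin d) (Fin d) ℝ) :
    MeasurableSet {M : Matrix (Fin d) (Fin d) ℝ | ¬ Y ≤ M} :=
  (isClosed_setOf_posSemidef.preimage (continuous_id.sub continuous_const)).measurableSet.compl

lemma Matrix.le_mul_mul_iff_inv_mul_mul_le [DecidableEq n] {𝕜 : Type*} [RCLike 𝕜]
    {s X U : Matrix n n 𝕜} (hs : IsSelfAdjoint s) (hdet : IsUnit s.det) :
    X ≤ s * U * s ↔ s⁻¹ * X * s⁻¹ ≤ U := by
  have hs' : IsSelfAdjoint s⁻¹ := by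
    rw [IsSelfAdjoint, Matrix.star_eq_conjTranspose, Matrix.conjTranspose_nonsing_inv,
      ← Matrix.star_eq_conjTranspose, hs.star_eq]
  constructor
  · intro h
    simpa [← Matrix.mul_assoc, nonsing_inv_mul _ hdet, mul_nonsing_inv_cancel_right s _ hdet]
      using hs'.conjugate_le_conjugate h
  · intro h
    simpa [← Matrix.mul_assoc, mul_nonsing_inv _ hdet, nonsing_inv_mul_cancel_right s _ hdet]
      using hs.conjugate_le_conjugate h

lemma Matrix.PosDef.loewnerLE_matSqrt_mul_mul_iff {A X U : Matrix (Fin d) (Fin d) ℝ}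
    (hA : A.PosDef) :
    LoewnerLE X (matSqrt A * U * matSqrt A) ↔ CFC.sqrt A⁻¹ * X * CFC.sqrt A⁻¹ ≤ U := by
  have hunit : IsUnit (CFC.sqrt A).det :=
    (isUnit_iff_isUnit_det _).mp ((CFC.isUnit_sqrt_iff A hA.posSemidef.nonneg).mpr hA.isUnit)
  rw [loewnerLE_iff_le, matSqrt_eq_sqrt hA.posSemidef,
    le_mul_mul_iff_inv_mul_mul_le (CFC.sqrt_nonneg A).isSelfAdjoint hunit, hA.posSemidef.inv_sqrt]

lemma Matrix.PosSemidef.trace_sqrt_inv_mul_mul_sqrt_inv [DecidableEq n] {𝕜 : Type*} [RCLike 𝕜]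
    {A : Matrix n n 𝕜} (hA : A.PosSemidef) (M : Matrix n n 𝕜) :
    (CFC.sqrt A⁻¹ * M * CFC.sqrt A⁻¹).trace = (M * A⁻¹).trace := by
  rw [trace_mul_cycle, CFC.sqrt_mul_sqrt_self _ hA.inv.nonneg, trace_mul_comm]

end LoewnerOrder

section Grid

variable {n : Type*} [Fintype n]

lemma Matrix.abs_dotProduct_mulVec_le {δ : ℝ} {N : Matrix n n ℝ} (h : ∀ i j, |N i j| ≤ δ)
    (x : n → ℝ) : |x ⬝ᵥ (N *ᵥ x)| ≤ δ * (∑ i, |x i|) ^ 2 := by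
  calc |x ⬝ᵥ (N *ᵥ x)| = |∑ i, ∑ j, x i * N i j * x j| := by
        simp only [dotProduct, mulVec, Finset.mul_sum, mul_assoc]
    _ ≤ ∑ i, ∑ j, |x i| * δ * |x j| := by
        refine (Finset.abs_sum_le_sum_abs _ _).trans (Finset.sum_le_sum fun i _ =>
          (Finset.abs_sum_le_sum_abs _ _).trans (Finset.sum_le_sum fun j _ => ?_))
        rw [abs_mul, abs_mul]
        gcongr
        exact h i j
    _ = δ * (∑ i, |x i|) ^ 2 := by
        simp only [sq, Finset.sum_mul, Finset.mul_sum]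
        exact Finset.sum_congr rfl fun i _ => Finset.sum_congr rfl fun j _ => by ring

lemma Matrix.le_add_smul_one_of_abs_sub_le [DecidableEq n] {δ : ℝ} (hδ : 0 ≤ δ)
    {P Q : Matrix n n ℝ} (hP : P.IsHermitian) (hQ : Q.IsHermitian)
    (h : ∀ i j, |P i j - Q i j| ≤ δ) :
    P ≤ Q + (Fintype.card n * δ) • 1 := by
  rw [le_iff, posSemidef_iff_dotProduct_mulVec]
  refine ⟨(hQ.add (isHermitian_one.smul (IsSelfAdjoint.all _))).sub hP, fun x => ?_⟩
  have hquad := abs_dotProduct_mulVec_le (N := Q - P) (fun i j => by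
    simpa only [sub_apply, abs_sub_comm] using h i j) x
  have hcs : (∑ i, |x i|) ^ 2 ≤ Fintype.card n * (x ⬝ᵥ x) := by
    simpa only [sq_abs, Finset.card_univ, dotProduct, ← sq]
      using sq_sum_le_card_mul_sum_sq (s := Finset.univ) (f := fun i => |x i|)
  have hexpand : star x ⬝ᵥ ((Q + (Fintype.card n * δ) • 1 - P) *ᵥ x)
      = x ⬝ᵥ ((Q - P) *ᵥ x) + Fintype.card n * δ * (x ⬝ᵥ x) := by
    simp [add_sub_right_comm, add_mulVec, smul_mulVec, dotProduct_add, dotProduct_smul]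
  rw [hexpand]
  nlinarith [neg_abs_le (x ⬝ᵥ ((Q - P) *ᵥ x)), mul_le_mul_of_nonneg_left hcs hδ]

/-- Valued in `n → n → ℤ` rather than `Matrix n n ℤ`, which carries no measurable structure. -/
def gridFloor (δ : ℝ) (M : Matrix n n ℝ) : n → n → ℤ := fun i j => ⌊M i j / δ⌋

def gridUpper [DecidableEq n] (δ : ℝ) (z : n → n → ℤ) : Matrix n n ℝ :=
  Matrix.of (fun i j => (z i j : ℝ) * δ) + (Fintype.card n * δ) • 1

variable [DecidableEq n] {δ : ℝ} {M : Matrix n n ℝ}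

lemma le_gridUpper_gridFloor (hδ : 0 < δ) (hM : M.IsHermitian) :
    M ≤ gridUpper δ (gridFloor δ M) := by
  refine le_add_smul_one_of_abs_sub_le hδ.le hM ?_ fun i j => ?_
  · ext i j
    rw [conjTranspose_apply, star_trivial, of_apply, of_apply, gridFloor, gridFloor,
      ← hM.apply i j, star_trivial]
  · change |M i j - ⌊M i j / δ⌋ * δ| ≤ δ
    rw [abs_of_nonneg (Int.sub_floor_div_mul_nonneg _ hδ)]
    exact (Int.sub_floor_div_mul_lt _ hδ).le

lemma trace_gridUpper_gridFloor_le (hδ : 0 < δ) :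
    (gridUpper δ (gridFloor δ M)).trace ≤ M.trace + Fintype.card n ^ 2 * δ := by
  have hdiag : (Matrix.of fun i j => (gridFloor δ M i j : ℝ) * δ).trace ≤ M.trace :=
    Finset.sum_le_sum fun i _ => sub_nonneg.mp (Int.sub_floor_div_mul_nonneg _ hδ)
  simp only [gridUpper, trace_add, trace_smul, trace_one, smul_eq_mul]
  nlinarith

lemma measurable_gridFloor {d : ℕ} (δ : ℝ) :
    Measurable (gridFloor (n := Fin d) δ) := by
  unfold gridFloor
  fun_prop

end Grid

section TraceSuperUniform

variable {Ω : Type*} {m0 : MeasurableSpace Ω} {μ : Measure Ω} {d : ℕ}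
  {U : Ω → Matrix (Fin d) (Fin d) ℝ}

lemma TraceSuperUniform.measure_not_le_comp_le_lintegral {ι : Type*} [Countable ι]
    [MeasurableSpace ι] [MeasurableSingletonClass ι] (hU : TraceSuperUniform μ U)
    {K : Ω → ι} (hK : AEMeasurable K μ) (hKU : IndepFun K U μ) (Y : ι → Matrix (Fin d) (Fin d) ℝ)
    (hY : ∀ ω, (Y (K ω)).PosSemidef) :
    μ {ω | ¬ Y (K ω) ≤ U ω} ≤ ∫⁻ ω, ENNReal.ofReal (Y (K ω)).trace ∂μ := by
  have hcover : {ω | ¬ Y (K ω) ≤ U ω} ⊆ ⋃ z, K ⁻¹' {z} ∩ U ⁻¹' {M | ¬ Y z ≤ M} :=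
    fun ω hω => Set.mem_iUnion.mpr ⟨K ω, rfl, hω⟩
  have hfiber : ∀ z, μ (K ⁻¹' {z} ∩ U ⁻¹' {M | ¬ Y z ≤ M}) ≤
      μ (K ⁻¹' {z}) * ENNReal.ofReal (Y z).trace := by
    intro z
    rw [hKU.measure_inter_preimage_eq_mul _ _ (measurableSet_singleton z)
      (measurableSet_setOf_not_le (Y z))]
    rcases (K ⁻¹' {z}).eq_empty_or_nonempty with hempty | ⟨ω, rfl⟩
    · simp [hempty]
    · gcongr
      exact hU _ (hY ω)
  calc μ {ω | ¬ Y (K ω) ≤ U ω}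
      ≤ ∑' z, μ (K ⁻¹' {z} ∩ U ⁻¹' {M | ¬ Y z ≤ M}) :=
        (measure_mono hcover).trans (measure_iUnion_le _)
    _ ≤ ∑' z, μ (K ⁻¹' {z}) * ENNReal.ofReal (Y z).trace := ENNReal.tsum_le_tsum hfiber
    _ = ∫⁻ ω, ENNReal.ofReal (Y (K ω)).trace ∂μ := by
        rw [← lintegral_map' (f := fun z => ENNReal.ofReal (Y z).trace)
          (measurable_of_countable _).aemeasurable hK, lintegral_countable']
        refine tsum_congr fun z => ?_
        rw [Measure.map_apply_of_aemeasurable hK (measurableSet_singleton z), mul_comm]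

variable [IsProbabilityMeasure μ]

lemma TraceSuperUniform.measure_not_le_le_integral_trace (hU : TraceSuperUniform μ U)
    {G : Ω → Matrix (Fin d) (Fin d) ℝ} (hG : ∀ ω, (G ω).PosSemidef) (hGm : AEMeasurable G μ)
    (hGint : Integrable (fun ω => (G ω).trace) μ) (hGU : IndepFun G U μ) :
    μ {ω | ¬ G ω ≤ U ω} ≤ ENNReal.ofReal (∫ ω, (G ω).trace ∂μ) := by
  have hbound : ∀ δ > 0,
      μ {ω | ¬ G ω ≤ U ω} ≤ ENNReal.ofReal (∫ ω, (G ω).trace ∂μ + d ^ 2 * δ) := by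
    intro δ hδ
    have hle : ∀ ω, G ω ≤ gridUpper δ (gridFloor δ (G ω)) := fun ω =>
      le_gridUpper_gridFloor hδ (hG ω).1
    calc μ {ω | ¬ G ω ≤ U ω}
        ≤ μ {ω | ¬ gridUpper δ (gridFloor δ (G ω)) ≤ U ω} :=
          measure_mono fun ω hω h => hω ((hle ω).trans h)
      _ ≤ ∫⁻ ω, ENNReal.ofReal (gridUpper δ (gridFloor δ (G ω))).trace ∂μ :=
          hU.measure_not_le_comp_le_lintegral ((measurable_gridFloor δ).comp_aemeasurable hGm)
            (hGU.comp (measurable_gridFloor δ) measurable_id) _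
            fun ω => nonneg_iff_posSemidef.mp ((hG ω).nonneg.trans (hle ω))
      _ ≤ ∫⁻ ω, ENNReal.ofReal ((G ω).trace + d ^ 2 * δ) ∂μ := by
          gcongr with ω
          simpa using trace_gridUpper_gridFloor_le (M := G ω) hδ
      _ = ENNReal.ofReal (∫ ω, ((G ω).trace + d ^ 2 * δ) ∂μ) :=
          (ofReal_integral_eq_lintegral_ofReal (hGint.add (integrable_const _))
            (Eventually.of_forall fun ω => add_nonneg (hG ω).trace_nonneg (by positivity))).symm
      _ = ENNReal.ofReal (∫ ω, (G ω).trace ∂μ + d ^ 2 * δ) := by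
          rw [integral_add hGint (integrable_const _), integral_const, probReal_univ, one_smul]
  have hcont : Continuous fun δ : ℝ => ENNReal.ofReal (∫ ω, (G ω).trace ∂μ + d ^ 2 * δ) :=
    ENNReal.continuous_ofReal.comp (by fun_prop)
  exact ge_of_tendsto ((hcont.tendsto' 0 _ (by simp)).mono_left nhdsWithin_le_nhds)
    (eventually_nhdsWithin_of_forall (s := Set.Ioi 0) hbound)

end TraceSuperUniform

section Expectation

variable {Ω : Type*} {m0 : MeasurableSpace Ω} {μ : Measure Ω} {d : ℕ}
  {X : Ω → Matrix (Fin d) (Fin d) ℝ}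

lemma Matrix.trace_mul_eq_sum_sum {n : Type*} [Fintype n] (M B : Matrix n n ℝ) :
    (M * B).trace = ∑ i, ∑ j, M i j * B j i := by
  simp [trace, mul_apply]

lemma integrable_trace_mul (hX : ∀ i j, Integrable (fun ω => X ω i j) μ)
    (B : Matrix (Fin d) (Fin d) ℝ) : Integrable (fun ω => (X ω * B).trace) μ := by
  simp only [trace_mul_eq_sum_sum]
  exact integrable_finsetSum _ fun i _ => integrable_finsetSum _ fun j _ => (hX i j).mul_const _

lemma integral_trace_mul (hX : ∀ i j, Integrable (fun ω => X ω i j) μ)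
    (B : Matrix (Fin d) (Fin d) ℝ) : ∫ ω, (X ω * B).trace ∂μ = (matExpect μ X * B).trace := by
  simp only [trace_mul_eq_sum_sum]
  rw [integral_finsetSum _ fun i _ => integrable_finsetSum _ fun j _ => (hX i j).mul_const _]
  refine Finset.sum_congr rfl fun i _ => ?_
  rw [integral_finsetSum _ fun j _ => (hX i j).mul_const _]
  exact Finset.sum_congr rfl fun j _ => integral_mul_const _ _

end Expectation

theorem stmt0_general {Ω : Type*} {m0 : MeasurableSpace Ω} (μ : Measure Ω) [IsProbabilityMeasure μ]
    {d : ℕ} (X U : Ω → Matrix (Fin d) (Fin d) ℝ)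
    (hXpsd : ∀ ω, (X ω).PosSemidef)
    (hXint : ∀ i j, Integrable (fun ω => X ω i j) μ)
    (hU : TraceSuperUniform μ U)
    (hindep : IndepFun X U μ)
    (A : Matrix (Fin d) (Fin d) ℝ) (hA : A.PosDef) :
    μ {ω | ¬ LoewnerLE (X ω) (matSqrt A * U ω * matSqrt A)} ≤
      ENNReal.ofReal ((matExpect μ X * A⁻¹).trace) := by
  have htrace := hA.posSemidef.trace_sqrt_inv_mul_mul_sqrt_inv
  have hXm : AEMeasurable X μ := aemeasurable_pi_lambda _ fun i =>
    aemeasurable_pi_lambda _ fun j => (hXint i j).aemeasurable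
  have hconj : Measurable fun M : Matrix (Fin d) (Fin d) ℝ => CFC.sqrt A⁻¹ * M * CFC.sqrt A⁻¹ :=
    Continuous.measurable (by fun_prop)
  simp_rw [hA.loewnerLE_matSqrt_mul_mul_iff, ← integral_trace_mul hXint, ← htrace]
  exact hU.measure_not_le_le_integral_trace
    (fun ω => nonneg_iff_posSemidef.mp
      (conjugate_nonneg_of_nonneg (hXpsd ω).nonneg (CFC.sqrt_nonneg _)))
    (hconj.comp_aemeasurable hXm)
    ((integrable_trace_mul hXint A⁻¹).congr (Eventually.of_forall fun ω => (htrace _).symm))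
    (hindep.comp hconj measurable_id)

/-- **Uniformly randomized matrix Markov inequality.**
If `X` is a random positive semidefinite matrix with integrable entries, `U` is a trace
super-uniform random positive semidefinite matrix independent of `X`, and `A ≻ 0`, then
`P(X ⋠ A^{1/2} U A^{1/2}) ≤ tr(E[X] A⁻¹)`. -/
theorem stmt0 {Ω : Type*} {m0 : MeasurableSpace Ω} (μ : Measure Ω) [IsProbabilityMeasure μ]
    {d : ℕ} (X U : Ω → Matrix (Fin d) (Fin d) ℝ)
    (hXpsd : ∀ ω, (X ω).PosSemidef)
    (hXint : ∀ i j, Integrable (fun ω => X ω i j) μ)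
    (hUpsd : ∀ ω, (U ω).PosSemidef)
    (hU : TraceSuperUniform μ U)
    (hindep : IndepFun X U μ)
    (A : Matrix (Fin d) (Fin d) ℝ) (hA : A.PosDef) :
    μ {ω | ¬ LoewnerLE (X ω) (matSqrt A * U ω * matSqrt A)} ≤
      ENNReal.ofReal ((matExpect μ X * A⁻¹).trace) :=
  stmt0_general (m0 := m0) μ X U hXpsd hXint hU hindep A hA

end
end

section
/- Let {Fₙ} be a filtration, and for each n ≥ 1 let Eₙ be an Fₙ-measurable random d×d positive semidefinite matrix and Aₙ an F_{n−1}-measurable random d×d positive definite matrix such that E(Eₙ | F_{n−1}) ⪯ Aₙ⁻¹ almost surely. Then the process Yₙ = Pₙ Pₙᵀ, where Pₙ = A₁^{1/2} E₁^{1/2} A₂^{1/2} E₂^{1/2} ⋯ Aₙ^{1/2} Eₙ^{1/2} (and Y₀ = I), is a matrix supermartingale with respect to {Fₙ}. -/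
open MeasureTheory ProbabilityTheory Matrix Filter

noncomputable section

/-!
Write `Qₙ = Pₙ Aₙ₊₁^{1/2}`, which is `ℱₙ`-measurable. Then `Yₙ₊₁ = Qₙ Eₙ₊₁ Qₙᵀ` and
`Yₙ = Qₙ Aₙ₊₁⁻¹ Qₙᵀ`, so pulling `Qₙ` out of the conditional expectation gives
`E(Yₙ₊₁ | ℱₙ) = Qₙ E(Eₙ₊₁ | ℱₙ) Qₙᵀ ⪯ Qₙ Aₙ₊₁⁻¹ Qₙᵀ = Yₙ`.
As `Qₙ` need not be bounded, this is done for the quadratic forms `vᵀ Yₙ₊₁ v = uᵀ Eₙ₊₁ u`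
(`u = Qₙᵀ v`) after truncating to `{‖u‖ ≤ R}`; the same truncation and monotone convergence show
that `uᵀ Eₙ₊₁ u` is integrable, its expectation being at most that of `uᵀ Aₙ₊₁⁻¹ u = vᵀ Yₙ v`.
The Loewner inequality is recovered from the quadratic forms at a countable dense set of `v`.
-/

section MatrixSqrt

variable {d : ℕ}

theorem matCFC_eq_cfc (f : ℝ → ℝ) (X : Matrix (Fin d) (Fin d) ℝ) : matCFC f X = cfc f X := by
  by_cases hX : X.IsHermitian
  · rw [hX.cfc_eq, Matrix.IsHermitian.cfc, Unitary.conjStarAlgAut_apply, matCFC, dif_pos hX]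
    rfl
  · rw [matCFC, dif_neg hX]
    exact (cfc_apply_of_not_predicate X hX).symm

theorem matSqrt_eq_cfc (X : Matrix (Fin d) (Fin d) ℝ) : matSqrt X = cfc Real.sqrt X :=
  matCFC_eq_cfc _ X

theorem transpose_matSqrt (X : Matrix (Fin d) (Fin d) ℝ) : (matSqrt X)ᵀ = matSqrt X := by
  rw [← conjTranspose_eq_transpose_of_trivial, matSqrt_eq_cfc]
  exact cfc_predicate Real.sqrt X

theorem matSqrt_mul_self {X : Matrix (Fin d) (Fin d) ℝ} (hX : X.PosSemidef) :
    matSqrt X * matSqrt X = X := by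
  have hspec : ∀ x ∈ spectrum ℝ X, 0 ≤ x := by
    rw [hX.1.spectrum_real_eq_range_eigenvalues]
    rintro _ ⟨i, rfl⟩
    exact hX.eigenvalues_nonneg i
  rw [matSqrt_eq_cfc, ← cfc_mul Real.sqrt Real.sqrt X]
  exact (cfc_congr fun x hx => Real.mul_self_sqrt (hspec x hx)).trans (cfc_id ℝ X hX.1)

theorem matSqrt_mul_inv_mul_matSqrt {X : Matrix (Fin d) (Fin d) ℝ} (hX : X.PosDef) :
    matSqrt X * X⁻¹ * matSqrt X = 1 := by
  have hS := matSqrt_mul_self hX.posSemidef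
  have hunit : IsUnit (matSqrt X).det := by
    refine isUnit_iff_ne_zero.mpr fun h0 => hX.det_pos.ne' ?_
    rw [← hS, det_mul, h0, zero_mul]
  have hinv : X⁻¹ = (matSqrt X)⁻¹ * (matSqrt X)⁻¹ := by
    conv_lhs => rw [← hS]
    exact Matrix.mul_inv_rev _ _
  rw [hinv, ← Matrix.mul_assoc, Matrix.mul_nonsing_inv _ hunit, Matrix.one_mul,
    Matrix.nonsing_inv_mul _ hunit]

theorem mul_matSqrt_mul_transpose (P X : Matrix (Fin d) (Fin d) ℝ)
    {Y : Matrix (Fin d) (Fin d) ℝ} (hY : Y.PosSemidef) :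
    P * (matSqrt X * matSqrt Y) * (P * (matSqrt X * matSqrt Y))ᵀ =
      P * matSqrt X * Y * (P * matSqrt X)ᵀ := by
  simp only [transpose_mul, transpose_matSqrt, Matrix.mul_assoc]
  rw [← Matrix.mul_assoc (matSqrt Y), matSqrt_mul_self hY]

theorem mul_transpose_eq_mul_matSqrt_mul_inv (P : Matrix (Fin d) (Fin d) ℝ)
    {X : Matrix (Fin d) (Fin d) ℝ} (hX : X.PosDef) :
    P * Pᵀ = P * matSqrt X * X⁻¹ * (P * matSqrt X)ᵀ := by
  rw [transpose_mul, transpose_matSqrt, Matrix.mul_assoc P, Matrix.mul_assoc P,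
    ← Matrix.mul_assoc _ _ Pᵀ, matSqrt_mul_inv_mul_matSqrt hX, Matrix.one_mul]

end MatrixSqrt

section Measurability

open Polynomial in
theorem exists_polynomial_tendsto_cfc {A : Type*} [Ring A] [StarRing A] [TopologicalSpace A]
    [Algebra ℝ A] {p : A → Prop} [ContinuousFunctionalCalculus ℝ A p] {f : ℝ → ℝ}
    (hf : Continuous f) :
    ∃ q : ℕ → ℝ[X], ∀ a : A, p a →
      Tendsto (fun k => aeval a (q k)) atTop (nhds (cfc f a)) := by
  choose q hq using fun k : ℕ => exists_polynomial_near_of_continuousOn (-k) k f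
    hf.continuousOn (1 / (k + 1)) (by positivity)
  refine ⟨q, fun a ha => ?_⟩
  obtain ⟨R, hR⟩ :=
    (ContinuousFunctionalCalculus.isCompact_spectrum (R := ℝ) a).isBounded.subset_closedBall 0
  have huniform : TendstoUniformlyOn (fun k x => (q k).eval x) f atTop (spectrum ℝ a) := by
    rw [Metric.tendstoUniformlyOn_iff]
    intro ε hε
    obtain ⟨K, hK⟩ := exists_nat_gt (max R (1 / ε))
    filter_upwards [eventually_ge_atTop K] with k hk x hx
    have hKk : (K : ℝ) ≤ k := by exact_mod_cast hk
    have hx' : |x| ≤ k := by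
      have := hR hx
      rw [Metric.mem_closedBall, dist_zero_right, Real.norm_eq_abs] at this
      linarith [le_max_left R (1 / ε)]
    rw [Real.dist_eq, abs_sub_comm]
    calc |(q k).eval x - f x| < 1 / (k + 1) := hq k x (abs_le.mp hx')
      _ ≤ ε := by
        rw [div_le_iff₀ (by positivity), ← div_le_iff₀' hε]
        linarith [le_max_right R (1 / ε)]
  have := tendsto_cfc_fun huniform (Eventually.of_forall fun k => (q k).continuous.continuousOn)
  simpa only [cfc_polynomial _ a ha] using this

variable {Ω : Type*} {m : MeasurableSpace Ω} {d : ℕ}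

instance : BorelSpace (Matrix (Fin d) (Fin d) ℝ) :=
  inferInstanceAs (BorelSpace (Fin d → Fin d → ℝ))

instance : SecondCountableTopology (Matrix (Fin d) (Fin d) ℝ) :=
  inferInstanceAs (SecondCountableTopology (Fin d → Fin d → ℝ))

instance : TopologicalSpace.PseudoMetrizableSpace (Matrix (Fin d) (Fin d) ℝ) :=
  inferInstanceAs (TopologicalSpace.PseudoMetrizableSpace (Fin d → Fin d → ℝ))

theorem measurable_matrix_iff {X : Ω → Matrix (Fin d) (Fin d) ℝ} :
    Measurable X ↔ ∀ i j, Measurable fun ω => X ω i j :=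
  measurable_pi_iff.trans (forall_congr' fun _ => measurable_pi_iff)

theorem Measurable.matrix_cfc {f : ℝ → ℝ} (hf : Continuous f) {X : Ω → Matrix (Fin d) (Fin d) ℝ}
    (hX : Measurable X) (hXh : ∀ ω, (X ω).IsHermitian) :
    Measurable fun ω => cfc f (X ω) := by
  obtain ⟨q, hq⟩ := exists_polynomial_tendsto_cfc (A := Matrix (Fin d) (Fin d) ℝ) hf
  exact measurable_of_tendsto_metrizable (fun k => (q k).continuous_aeval.measurable.comp hX)
    (tendsto_pi_nhds.mpr fun ω => hq (X ω) (hXh ω))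

theorem Measurable.matSqrt {X : Ω → Matrix (Fin d) (Fin d) ℝ} (hX : Measurable X)
    (hXh : ∀ ω, (X ω).IsHermitian) : Measurable fun ω => matSqrt (X ω) := by
  simp_rw [matSqrt_eq_cfc]
  exact hX.matrix_cfc Real.continuous_sqrt hXh

end Measurability

section QuadraticForm

variable {d : ℕ}

theorem dotProduct_mulVec_eq_sum (x : Fin d → ℝ) (M : Matrix (Fin d) (Fin d) ℝ) :
    x ⬝ᵥ M *ᵥ x = ∑ p : Fin d × Fin d, x p.1 * x p.2 * M p.1 p.2 := by
  simp only [dotProduct, mulVec, Finset.mul_sum, Fintype.sum_prod_type]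
  exact Finset.sum_congr rfl fun k _ => Finset.sum_congr rfl fun l _ => by ring

theorem dotProduct_mulVec_mul_mul_transpose (Q M : Matrix (Fin d) (Fin d) ℝ) (v : Fin d → ℝ) :
    v ⬝ᵥ (Q * M * Qᵀ) *ᵥ v = (Qᵀ *ᵥ v) ⬝ᵥ M *ᵥ (Qᵀ *ᵥ v) := by
  rw [← mulVec_mulVec, ← mulVec_mulVec, dotProduct_mulVec, ← mulVec_transpose]

theorem Matrix.IsHermitian.apply_eq_polarization {M : Matrix (Fin d) (Fin d) ℝ}
    (hM : M.IsHermitian) (i j : Fin d) :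
    M i j = ((Pi.single i 1 + Pi.single j 1) ⬝ᵥ M *ᵥ (Pi.single i 1 + Pi.single j 1)
      - Pi.single i 1 ⬝ᵥ M *ᵥ Pi.single i 1 - Pi.single j 1 ⬝ᵥ M *ᵥ Pi.single j 1) / 2 := by
  have hji : M j i = M i j := by simpa using congrFun (congrFun hM i) j
  have hsingle : ∀ k l, Pi.single k 1 ⬝ᵥ M *ᵥ Pi.single l 1 = M k l := fun k l => by
    simp [mulVec_single, single_dotProduct]
  rw [mulVec_add, dotProduct_add, add_dotProduct, add_dotProduct, hsingle, hsingle, hsingle,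
    hsingle, hji]
  ring

theorem LoewnerLE.dotProduct_mulVec_le {M M' : Matrix (Fin d) (Fin d) ℝ} (h : LoewnerLE M M')
    (x : Fin d → ℝ) : x ⬝ᵥ M *ᵥ x ≤ x ⬝ᵥ M' *ᵥ x := by
  have := h.dotProduct_mulVec_nonneg x
  rwa [star_trivial, sub_mulVec, dotProduct_sub, sub_nonneg] at this

theorem posSemidef_of_dense_dotProduct_mulVec_nonneg {M : Matrix (Fin d) (Fin d) ℝ}
    (hM : M.IsHermitian) {D : Set (Fin d → ℝ)} (hD : Dense D) (h : ∀ v ∈ D, 0 ≤ v ⬝ᵥ M *ᵥ v) :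
    M.PosSemidef := by
  have hclosed : IsClosed {v : Fin d → ℝ | 0 ≤ v ⬝ᵥ M *ᵥ v} :=
    isClosed_le continuous_const (by fun_prop)
  refine .of_dotProduct_mulVec_nonneg hM fun v => ?_
  rw [star_trivial]
  exact closure_minimal h hclosed (hD v)

theorem norm_mul_apply_le {x : Fin d → ℝ} {C : ℝ} (hx : ‖x‖ ≤ C) (i j : Fin d) :
    ‖x i * x j‖ ≤ C * C := by
  rw [norm_mul]
  exact mul_le_mul ((norm_le_pi_norm x i).trans hx) ((norm_le_pi_norm x j).trans hx)
    (norm_nonneg _) ((norm_nonneg _).trans hx)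

end QuadraticForm

section CondExp

variable {Ω : Type*} {m m0 : MeasurableSpace Ω} {μ : Measure Ω}

theorem integrable_sum_mul_of_bounded {ι : Type*} [Fintype ι] {c f : ι → Ω → ℝ}
    (hc : ∀ i, AEStronglyMeasurable (c i) μ) {C : ℝ} (hcC : ∀ i ω, ‖c i ω‖ ≤ C)
    (hf : ∀ i, Integrable (f i) μ) : Integrable (fun ω => ∑ i, c i ω * f i ω) μ :=
  integrable_finsetSum _ fun i _ => (hf i).bdd_mul (hc i) (Eventually.of_forall (hcC i))

theorem condExp_sum_mul_of_bounded {ι : Type*} [Fintype ι] (hm : m ≤ m0) {c f : ι → Ω → ℝ}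
    (hc : ∀ i, StronglyMeasurable[m] (c i)) {C : ℝ} (hcC : ∀ i ω, ‖c i ω‖ ≤ C)
    (hf : ∀ i, Integrable (f i) μ) :
    μ[fun ω => ∑ i, c i ω * f i ω | m] =ᵐ[μ] fun ω => ∑ i, c i ω * μ[f i | m] ω := by
  have hterm : ∀ i, Integrable (c i * f i) μ := fun i =>
    (hf i).bdd_mul ((hc i).mono hm).aestronglyMeasurable (Eventually.of_forall (hcC i))
  have hsum : (fun ω => ∑ i, c i ω * f i ω) = ∑ i, c i * f i := by
    ext ω; simp
  filter_upwards [hsum ▸ condExp_finsetSum (fun i _ => hterm i) m,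
    ae_all_iff.2 fun i => condExp_mul_of_stronglyMeasurable_left (m := m) (hc i) (hterm i) (hf i)]
    with ω hω hterms
  simp [hω, hterms]

variable {d : ℕ} {N : Ω → Matrix (Fin d) (Fin d) ℝ}

theorem integrable_dotProduct_mulVec_of_bounded {w : Ω → Fin d → ℝ} (hw : Measurable w) {C : ℝ}
    (hC : ∀ ω, ‖w ω‖ ≤ C) (hN : ∀ i j, Integrable (fun ω => N ω i j) μ) :
    Integrable (fun ω => w ω ⬝ᵥ N ω *ᵥ w ω) μ := by
  simp_rw [dotProduct_mulVec_eq_sum]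
  exact integrable_sum_mul_of_bounded
    (fun (p : Fin d × Fin d) => (((measurable_pi_apply p.1).comp hw).mul
      ((measurable_pi_apply p.2).comp hw)).aestronglyMeasurable)
    (fun p ω => norm_mul_apply_le (hC ω) p.1 p.2) (fun p => hN p.1 p.2)

theorem integrable_dotProduct_mulVec (hN : ∀ i j, Integrable (fun ω => N ω i j) μ)
    (v : Fin d → ℝ) : Integrable (fun ω => v ⬝ᵥ N ω *ᵥ v) μ :=
  integrable_dotProduct_mulVec_of_bounded (w := fun _ => v) measurable_const (fun _ => le_rfl) hN

theorem integrable_apply_of_forall_integrable_dotProduct_mulVec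
    (hN : ∀ ω, (N ω).IsHermitian) (h : ∀ v, Integrable (fun ω => v ⬝ᵥ N ω *ᵥ v) μ)
    (i j : Fin d) : Integrable (fun ω => N ω i j) μ := by
  simp_rw [fun ω => (hN ω).apply_eq_polarization i j]
  exact (((h _).sub (h _)).sub (h _)).div_const 2

theorem condExp_dotProduct_mulVec_of_bounded (hm : m ≤ m0) {w : Ω → Fin d → ℝ}
    (hw : Measurable[m] w) {C : ℝ} (hC : ∀ ω, ‖w ω‖ ≤ C)
    (hN : ∀ i j, Integrable (fun ω => N ω i j) μ) :
    μ[fun ω => w ω ⬝ᵥ N ω *ᵥ w ω | m] =ᵐ[μ] fun ω => w ω ⬝ᵥ matCondExp μ m N ω *ᵥ w ω := by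
  simp_rw [dotProduct_mulVec_eq_sum]
  exact condExp_sum_mul_of_bounded hm
    (fun (p : Fin d × Fin d) => (((measurable_pi_apply p.1).comp hw).mul
      ((measurable_pi_apply p.2).comp hw)).stronglyMeasurable)
    (fun p ω => norm_mul_apply_le (hC ω) p.1 p.2) (fun p => hN p.1 p.2)

theorem indicator_dotProduct_mulVec (s : Set Ω) (u : Ω → Fin d → ℝ) :
    (fun ω => s.indicator u ω ⬝ᵥ N ω *ᵥ s.indicator u ω) =
      s.indicator fun ω => u ω ⬝ᵥ N ω *ᵥ u ω := by
  ext ω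
  by_cases hω : ω ∈ s <;> simp [hω]

theorem norm_indicator_setOf_norm_le {E : Type*} [NormedAddCommGroup E] (u : Ω → E) {R : ℝ}
    (hR : 0 ≤ R) (ω : Ω) : ‖{ω | ‖u ω‖ ≤ R}.indicator u ω‖ ≤ R := by
  by_cases hω : ‖u ω‖ ≤ R <;> simp [Set.indicator, hω, hR]

theorem condExp_indicator_dotProduct_mulVec (hm : m ≤ m0) {u : Ω → Fin d → ℝ}
    (hu : Measurable[m] u) (hN : ∀ i j, Integrable (fun ω => N ω i j) μ) (R : ℕ) :
    μ[{ω | ‖u ω‖ ≤ R}.indicator (fun ω => u ω ⬝ᵥ N ω *ᵥ u ω) | m] =ᵐ[μ]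
      {ω | ‖u ω‖ ≤ R}.indicator fun ω => u ω ⬝ᵥ matCondExp μ m N ω *ᵥ u ω := by
  have hnorm : Measurable[m] fun ω => ‖u ω‖ := measurable_norm.comp hu
  have hS : MeasurableSet[m] {ω | ‖u ω‖ ≤ R} := measurableSet_le hnorm measurable_const
  rw [← indicator_dotProduct_mulVec, ← indicator_dotProduct_mulVec]
  exact condExp_dotProduct_mulVec_of_bounded hm (hu.indicator hS)
    (norm_indicator_setOf_norm_le u R.cast_nonneg) hN

theorem condExp_dotProduct_mulVec (hm : m ≤ m0) {u : Ω → Fin d → ℝ} (hu : Measurable[m] u)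
    (hN : ∀ i j, Integrable (fun ω => N ω i j) μ)
    (hNu : Integrable (fun ω => u ω ⬝ᵥ N ω *ᵥ u ω) μ) :
    μ[fun ω => u ω ⬝ᵥ N ω *ᵥ u ω | m] =ᵐ[μ] fun ω => u ω ⬝ᵥ matCondExp μ m N ω *ᵥ u ω := by
  have hnorm : Measurable[m] fun ω => ‖u ω‖ := measurable_norm.comp hu
  have htrunc : ∀ R : ℕ, {ω | ‖u ω‖ ≤ R}.indicator (μ[fun ω => u ω ⬝ᵥ N ω *ᵥ u ω | m]) =ᵐ[μ]
      {ω | ‖u ω‖ ≤ R}.indicator fun ω => u ω ⬝ᵥ matCondExp μ m N ω *ᵥ u ω := fun R =>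
    (condExp_indicator hNu (measurableSet_le hnorm measurable_const)).symm.trans
      (condExp_indicator_dotProduct_mulVec hm hu hN R)
  filter_upwards [ae_all_iff.2 htrunc] with ω hω
  have hmem : ‖u ω‖ ≤ ⌈‖u ω‖⌉₊ := Nat.le_ceil _
  simpa [Set.indicator, hmem] using hω ⌈‖u ω‖⌉₊

theorem integrable_dotProduct_mulVec_of_loewnerLE_condExp [IsFiniteMeasure μ] (hm : m ≤ m0)
    {u : Ω → Fin d → ℝ} (hu : Measurable[m] u) (hN : ∀ i j, Integrable (fun ω => N ω i j) μ)
    (hNpsd : ∀ ω, (N ω).PosSemidef) {B : Ω → Matrix (Fin d) (Fin d) ℝ}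
    (hBpsd : ∀ ω, (B ω).PosSemidef) (hNB : ∀ᵐ ω ∂μ, LoewnerLE (matCondExp μ m N ω) (B ω))
    (hBu : Integrable (fun ω => u ω ⬝ᵥ B ω *ᵥ u ω) μ) :
    Integrable (fun ω => u ω ⬝ᵥ N ω *ᵥ u ω) μ := by
  set S := fun R : ℕ => {ω | ‖u ω‖ ≤ R}
  have hnorm : Measurable[m] fun ω => ‖u ω‖ := measurable_norm.comp hu
  have hS : ∀ R, MeasurableSet[m] (S R) := fun R => measurableSet_le hnorm measurable_const
  have hcover : AECover μ atTop S :=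
    ⟨ae_of_all _ fun ω => eventually_ge_atTop ⌈‖u ω‖⌉₊ |>.mono fun R hR =>
      (Nat.le_ceil _).trans (Nat.cast_le.2 hR), fun R => hm _ (hS R)⟩
  have hS_int : ∀ R {M : Ω → Matrix (Fin d) (Fin d) ℝ},
      (∀ i j, Integrable (fun ω => M ω i j) μ) →
        Integrable ((S R).indicator fun ω => u ω ⬝ᵥ M ω *ᵥ u ω) μ := fun R M hM => by
    rw [← indicator_dotProduct_mulVec]
    exact integrable_dotProduct_mulVec_of_bounded ((hu.mono hm le_rfl).indicator (hm _ (hS R)))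
      (norm_indicator_setOf_norm_le u R.cast_nonneg) hM
  refine hcover.integrable_of_integral_bounded_of_nonneg_ae (∫ ω, u ω ⬝ᵥ B ω *ᵥ u ω ∂μ)
    (fun R => (integrable_indicator_iff (hm _ (hS R))).1 (hS_int R hN))
    (ae_of_all _ fun ω => by simpa using (hNpsd ω).dotProduct_mulVec_nonneg (u ω))
    (Eventually.of_forall fun R => ?_)
  calc ∫ ω in S R, u ω ⬝ᵥ N ω *ᵥ u ω ∂μ
      = ∫ ω, μ[(S R).indicator (fun ω => u ω ⬝ᵥ N ω *ᵥ u ω) | m] ω ∂μ := by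
        rw [integral_condExp hm, integral_indicator (hm _ (hS R))]
    _ = ∫ ω, (S R).indicator (fun ω => u ω ⬝ᵥ matCondExp μ m N ω *ᵥ u ω) ω ∂μ :=
        integral_congr_ae (condExp_indicator_dotProduct_mulVec hm hu hN R)
    _ ≤ ∫ ω, u ω ⬝ᵥ B ω *ᵥ u ω ∂μ := by
        refine integral_mono_ae (hS_int R fun i j => integrable_condExp) hBu ?_
        filter_upwards [hNB] with ω hω
        by_cases hωS : ω ∈ S R
        · simpa [Set.indicator_of_mem hωS] using hω.dotProduct_mulVec_le (u ω)
        · simpa [Set.indicator_of_notMem hωS] using (hBpsd ω).dotProduct_mulVec_nonneg (u ω)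

theorem ae_loewnerLE_of_forall_dotProduct_mulVec_le {M M' : Ω → Matrix (Fin d) (Fin d) ℝ}
    (hM : ∀ ω, (M ω).IsHermitian) (hM' : ∀ ω, (M' ω).IsHermitian)
    (h : ∀ v, ∀ᵐ ω ∂μ, v ⬝ᵥ M ω *ᵥ v ≤ v ⬝ᵥ M' ω *ᵥ v) :
    ∀ᵐ ω ∂μ, LoewnerLE (M ω) (M' ω) := by
  obtain ⟨D, hDc, hDd⟩ := TopologicalSpace.exists_countable_dense (Fin d → ℝ)
  filter_upwards [(ae_ball_iff hDc).2 fun v _ => h v] with ω hω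
  refine posSemidef_of_dense_dotProduct_mulVec_nonneg ((hM' ω).sub (hM ω)) hDd fun v hv => ?_
  rw [sub_mulVec, dotProduct_sub, sub_nonneg]
  exact hω v hv

theorem isHermitian_matCondExp (hN : ∀ ω, (N ω).IsHermitian) (ω : Ω) :
    (matCondExp μ m N ω).IsHermitian := by
  ext i j
  have hsymm : (fun ω' => N ω' j i) = fun ω' => N ω' i j :=
    funext fun ω' => by simpa using congrFun (congrFun (hN ω') i) j
  simp [matCondExp, hsymm]

end CondExp

section Congruence

variable {Ω : Type*} {m m0 : MeasurableSpace Ω} {μ : Measure Ω} [IsFiniteMeasure μ] {d : ℕ}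
  {Q N B : Ω → Matrix (Fin d) (Fin d) ℝ}

theorem measurable_transpose_mulVec (hQ : Measurable[m] Q) (v : Fin d → ℝ) :
    Measurable[m] fun ω => (Q ω)ᵀ *ᵥ v :=
  (show Continuous fun X : Matrix (Fin d) (Fin d) ℝ => Xᵀ *ᵥ v by fun_prop).measurable.comp hQ

theorem integrable_dotProduct_mulVec_mul_mul_transpose (hm : m ≤ m0) (hQ : Measurable[m] Q)
    (hN : ∀ i j, Integrable (fun ω => N ω i j) μ) (hNpsd : ∀ ω, (N ω).PosSemidef)
    (hBpsd : ∀ ω, (B ω).PosSemidef) (hNB : ∀ᵐ ω ∂μ, LoewnerLE (matCondExp μ m N ω) (B ω))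
    (hQBQ : ∀ i j, Integrable (fun ω => (Q ω * B ω * (Q ω)ᵀ) i j) μ) (v : Fin d → ℝ) :
    Integrable (fun ω => v ⬝ᵥ (Q ω * N ω * (Q ω)ᵀ) *ᵥ v) μ := by
  have hB := integrable_dotProduct_mulVec hQBQ v
  simp_rw [dotProduct_mulVec_mul_mul_transpose] at hB ⊢
  exact integrable_dotProduct_mulVec_of_loewnerLE_condExp hm (measurable_transpose_mulVec hQ v)
    hN hNpsd hBpsd hNB hB

theorem integrable_apply_mul_mul_transpose (hm : m ≤ m0) (hQ : Measurable[m] Q)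
    (hN : ∀ i j, Integrable (fun ω => N ω i j) μ) (hNpsd : ∀ ω, (N ω).PosSemidef)
    (hBpsd : ∀ ω, (B ω).PosSemidef) (hNB : ∀ᵐ ω ∂μ, LoewnerLE (matCondExp μ m N ω) (B ω))
    (hQBQ : ∀ i j, Integrable (fun ω => (Q ω * B ω * (Q ω)ᵀ) i j) μ) (i j : Fin d) :
    Integrable (fun ω => (Q ω * N ω * (Q ω)ᵀ) i j) μ :=
  integrable_apply_of_forall_integrable_dotProduct_mulVec
    (fun ω => by simpa using ((hNpsd ω).mul_mul_conjTranspose_same (Q ω)).1)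
    (integrable_dotProduct_mulVec_mul_mul_transpose hm hQ hN hNpsd hBpsd hNB hQBQ) i j

theorem ae_loewnerLE_matCondExp_mul_mul_transpose (hm : m ≤ m0) (hQ : Measurable[m] Q)
    (hN : ∀ i j, Integrable (fun ω => N ω i j) μ) (hNpsd : ∀ ω, (N ω).PosSemidef)
    (hBpsd : ∀ ω, (B ω).PosSemidef) (hNB : ∀ᵐ ω ∂μ, LoewnerLE (matCondExp μ m N ω) (B ω))
    (hQBQ : ∀ i j, Integrable (fun ω => (Q ω * B ω * (Q ω)ᵀ) i j) μ) :
    ∀ᵐ ω ∂μ, LoewnerLE (matCondExp μ m (fun ω => Q ω * N ω * (Q ω)ᵀ) ω)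
      (Q ω * B ω * (Q ω)ᵀ) := by
  have hherm : ∀ {M : Ω → Matrix (Fin d) (Fin d) ℝ}, (∀ ω, (M ω).PosSemidef) →
      ∀ ω, (Q ω * M ω * (Q ω)ᵀ).IsHermitian := fun hM ω => by
    simpa using ((hM ω).mul_mul_conjTranspose_same (Q ω)).1
  refine ae_loewnerLE_of_forall_dotProduct_mulVec_le
    (isHermitian_matCondExp (hherm hNpsd)) (hherm hBpsd) fun v => ?_
  have hu := measurable_transpose_mulVec hQ v
  have hQNQ := integrable_dotProduct_mulVec_mul_mul_transpose hm hQ hN hNpsd hBpsd hNB hQBQ v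
  have hpull := condExp_dotProduct_mulVec_of_bounded (w := fun _ => v) hm measurable_const
    (fun _ => le_rfl) (integrable_apply_mul_mul_transpose hm hQ hN hNpsd hBpsd hNB hQBQ)
  simp_rw [dotProduct_mulVec_mul_mul_transpose] at hQNQ hpull ⊢
  filter_upwards [hpull, condExp_dotProduct_mulVec hm hu hN hQNQ, hNB] with ω hω hω' hωB
  rw [← hω, hω']
  exact hωB.dotProduct_mulVec_le _

end Congruence

section SqrtProd

variable {Ω : Type*} {d : ℕ}

def sqrtProd (A E : ℕ → Ω → Matrix (Fin d) (Fin d) ℝ) (n : ℕ) (ω : Ω) :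
    Matrix (Fin d) (Fin d) ℝ :=
  ((List.range n).map fun i => matSqrt (A (i + 1) ω) * matSqrt (E (i + 1) ω)).prod

variable {A E : ℕ → Ω → Matrix (Fin d) (Fin d) ℝ}

theorem sqrtProd_succ (n : ℕ) (ω : Ω) :
    sqrtProd A E (n + 1) ω =
      sqrtProd A E n ω * (matSqrt (A (n + 1) ω) * matSqrt (E (n + 1) ω)) := by
  simp [sqrtProd, List.range_succ]

theorem measurable_sqrtProd {m0 : MeasurableSpace Ω} (ℱ : Filtration ℕ m0)
    (hE : ∀ n, Measurable[ℱ (n + 1)] (E (n + 1))) (hEh : ∀ n ω, (E (n + 1) ω).IsHermitian)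
    (hA : ∀ n, Measurable[ℱ n] (A (n + 1))) (hAh : ∀ n ω, (A (n + 1) ω).IsHermitian) (n : ℕ) :
    Measurable[ℱ n] (sqrtProd A E n) := by
  induction n with
  | zero => exact measurable_const
  | succ n ih =>
    rw [show sqrtProd A E (n + 1) = _ from funext (sqrtProd_succ n)]
    exact (ih.mono (ℱ.mono n.le_succ) le_rfl).mul
      ((((hA n).matSqrt (hAh n)).mono (ℱ.mono n.le_succ) le_rfl).mul ((hE n).matSqrt (hEh n)))

theorem isMatrixSupermartingale_sqrtProd {m0 : MeasurableSpace Ω} {μ : Measure Ω}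
    [IsFiniteMeasure μ] (ℱ : Filtration ℕ m0)
    (hE : ∀ n, Measurable[ℱ (n + 1)] (E (n + 1)))
    (hEint : ∀ n i j, Integrable (fun ω => E (n + 1) ω i j) μ)
    (hEpsd : ∀ n ω, (E (n + 1) ω).PosSemidef)
    (hA : ∀ n, Measurable[ℱ n] (A (n + 1)))
    (hApd : ∀ n ω, (A (n + 1) ω).PosDef)
    (hcond : ∀ n, ∀ᵐ ω ∂μ, LoewnerLE (matCondExp μ (ℱ n) (E (n + 1)) ω) (A (n + 1) ω)⁻¹) :
    IsMatrixSupermartingale ℱ μ fun n ω => sqrtProd A E n ω * (sqrtProd A E n ω)ᵀ := by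
  set P := sqrtProd A E with hP_def
  have hP := measurable_sqrtProd ℱ hE (fun n ω => (hEpsd n ω).1) hA (fun n ω => (hApd n ω).1)
  have hQ : ∀ n, Measurable[ℱ n] fun ω => P n ω * matSqrt (A (n + 1) ω) :=
    fun n => (hP n).mul ((hA n).matSqrt fun ω => (hApd n ω).1)
  have hY_succ : ∀ n ω, P (n + 1) ω * (P (n + 1) ω)ᵀ =
      P n ω * matSqrt (A (n + 1) ω) * E (n + 1) ω * (P n ω * matSqrt (A (n + 1) ω))ᵀ :=
    fun n ω => by rw [hP_def, sqrtProd_succ]; exact mul_matSqrt_mul_transpose _ _ (hEpsd n ω)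
  have hY : ∀ n ω, P n ω * (P n ω)ᵀ =
      P n ω * matSqrt (A (n + 1) ω) * (A (n + 1) ω)⁻¹ * (P n ω * matSqrt (A (n + 1) ω))ᵀ :=
    fun n ω => mul_transpose_eq_mul_matSqrt_mul_inv _ (hApd n ω)
  have hAinv : ∀ n ω, ((A (n + 1) ω)⁻¹).PosSemidef := fun n ω => (hApd n ω).inv.posSemidef
  have hint : ∀ n i j, Integrable (fun ω => (P n ω * (P n ω)ᵀ) i j) μ := by
    intro n
    induction n with
    | zero => simp [P, sqrtProd]
    | succ n ih =>
      simp_rw [hY_succ]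
      exact integrable_apply_mul_mul_transpose (ℱ.le n) (hQ n) (hEint n) (hEpsd n) (hAinv n)
        (hcond n) (by simpa only [hY n] using ih)
  refine ⟨fun n ω => ?_, fun n i j => ?_, hint, fun n => ?_⟩
  · simpa using isHermitian_mul_conjTranspose_self (P n ω)
  · have hY_meas : Measurable[ℱ n] fun ω => P n ω * (P n ω)ᵀ :=
      (hP n).mul (continuous_id.matrix_transpose.measurable.comp (hP n))
    exact (measurable_matrix_iff.1 hY_meas i j).stronglyMeasurable
  · simp_rw [hY_succ, hY n]
    exact ae_loewnerLE_matCondExp_mul_mul_transpose (ℱ.le n) (hQ n) (hEint n) (hEpsd n)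
      (hAinv n) (hcond n) (by simpa only [hY n] using hint n)

end SqrtProd

/-- **Construction of matrix test supermartingales.**
If for each `n ≥ 1`, `Eₙ` is `ℱ n`-measurable positive semidefinite, `Aₙ` is
`ℱ (n-1)`-measurable positive definite, and `E(Eₙ | ℱ (n-1)) ⪯ Aₙ⁻¹` a.s., then
`Yₙ = Pₙ Pₙᵀ` with `Pₙ = A₁^{1/2} E₁^{1/2} ⋯ Aₙ^{1/2} Eₙ^{1/2}` (and `Y₀ = I`) is a matrix
supermartingale. -/
theorem stmt12 {Ω : Type*} {m0 : MeasurableSpace Ω} (μ : Measure Ω) [IsProbabilityMeasure μ]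
    {d : ℕ} (ℱ : Filtration ℕ m0)
    (E A : ℕ → Ω → Matrix (Fin d) (Fin d) ℝ)
    (hEmeas : ∀ n, 1 ≤ n → ∀ i j, StronglyMeasurable[ℱ n] fun ω => E n ω i j)
    (hEint : ∀ n, 1 ≤ n → ∀ i j, Integrable (fun ω => E n ω i j) μ)
    (hEpsd : ∀ n, 1 ≤ n → ∀ ω, (E n ω).PosSemidef)
    (hAmeas : ∀ n, 1 ≤ n → ∀ i j, StronglyMeasurable[ℱ (n - 1)] fun ω => A n ω i j)
    (hApd : ∀ n, 1 ≤ n → ∀ ω, (A n ω).PosDef)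
    (hcond : ∀ n, 1 ≤ n →
      ∀ᵐ ω ∂μ, LoewnerLE (matCondExp μ (ℱ (n - 1)) (E n) ω) (A n ω)⁻¹) :
    IsMatrixSupermartingale ℱ μ (fun n ω =>
      (((List.range n).map fun i => matSqrt (A (i + 1) ω) * matSqrt (E (i + 1) ω)).prod) *
      (((List.range n).map fun i => matSqrt (A (i + 1) ω) * matSqrt (E (i + 1) ω)).prod)ᵀ) :=
  isMatrixSupermartingale_sqrtProd ℱ
    (fun n => measurable_matrix_iff.2 fun i j => (hEmeas _ n.succ_pos i j).measurable)
    (fun n => hEint _ n.succ_pos) (fun n => hEpsd _ n.succ_pos)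
    (fun n => measurable_matrix_iff.2 fun i j => by
      simpa using (hAmeas _ n.succ_pos i j).measurable)
    (fun n => hApd _ n.succ_pos) (fun n => by simpa using hcond _ n.succ_pos)

end
end
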